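/- Fix A > 0 and λ ∈ (0, 1/8), and set ξ = √(1 − 8λ) ∈ (0, 1). Let C = ((1 − ξ)/(2·Γ(1 − ξ))) · (A/2)^{(1+ξ)/2} · Γ((1 − ξ)/2) · ₁F₁[−(1 + ξ)/2; 1 − ξ; 2/A], and define F(s) = (2λ A^s)/(s(s−1) + 2λ) · ₂F₂[1, −s; 3/2 + ξ/2 − s, 3/2 − ξ/2 − s; 2/A] + C · 2^s · Γ(1/2 + ξ/2 − s) · Γ(1/2 − ξ/2 − s) / Γ(−s). Then F(−1/2 + ξ/2) = ((1 − ξ)/4) · A^{(1+ξ)/2}; i.e., this choice of C makes the general solution of the fractional-moment recurrence take the value forced by the recurrence at s = −1/2 + ξ/2. -/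

import Mathlib

/-!
At `s₀ = (ξ - 1)/2` the `₂F₂` in `F` has parameters `1, (1 - ξ)/2; 2, 2 - ξ`, i.e. `1, a + 1; 2, b + 1`
with `a = -(1 + ξ)/2`, `b = 1 - ξ`. Shifting the index of the Kummer series gives the contiguous
relation `₁F₁[a; b; z] = 1 + (a z / b) · ₂F₂[1, a + 1; 2, b + 1; z]`, so the first summand of
`F(s₀)` equals `((1 - ξ)/4) A^{(1+ξ)/2} (1 - ₁F₁)`. The Gamma quotient in the second summand is
`Γ(1 - ξ)/Γ((1 - ξ)/2)`, which cancels against `C`, leaving `((1 - ξ)/4) A^{(1+ξ)/2} ₁F₁`.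
-/

/-- The Pochhammer symbol (rising factorial): `(z)₀ = 1`, `(z)_{n+1} = (z)_n · (z + n)`. -/
noncomputable def poch (z : ℝ) : ℕ → ℝ
  | 0 => 1
  | n + 1 => poch z n * (z + (n : ℝ))

/-- The generalized hypergeometric series `₂F₂[a₁,a₂; b₁,b₂; z]`. -/
noncomputable def F22 (a₁ a₂ b₁ b₂ z : ℝ) : ℝ :=
  ∑' n : ℕ, poch a₁ n * poch a₂ n / (poch b₁ n * poch b₂ n) * z ^ n / (Nat.factorial n : ℝ)

/-- The confluent hypergeometric (Kummer) series `₁F₁[a; b; z]`. -/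
noncomputable def F11 (a b z : ℝ) : ℝ :=
  ∑' n : ℕ, poch a n / poch b n * z ^ n / (Nat.factorial n : ℝ)

open Filter Topology Nat

lemma poch_succ (z : ℝ) (n : ℕ) : poch z (n + 1) = poch z n * (z + n) := rfl

lemma poch_succ_left (z : ℝ) : ∀ n : ℕ, poch z (n + 1) = z * poch (z + 1) n
  | 0 => by simp [poch]
  | n + 1 => by
    rw [poch_succ, poch_succ_left z n, poch_succ]
    push_cast
    ring

lemma poch_one : ∀ n : ℕ, poch 1 n = n !
  | 0 => by simp [poch]
  | n + 1 => by
    rw [poch_succ, poch_one n, Nat.factorial_succ]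
    push_cast
    ring

lemma poch_two (n : ℕ) : poch 2 n = (n + 1)! := by
  rw [← poch_one, poch_succ_left, one_add_one_eq_two, one_mul]

noncomputable def kummerTerm (a b z : ℝ) (n : ℕ) : ℝ :=
  poch a n / poch b n * z ^ n / n !

lemma F11_eq_tsum_kummerTerm (a b z : ℝ) : F11 a b z = ∑' n, kummerTerm a b z n := rfl

lemma kummerTerm_zero (a b z : ℝ) : kummerTerm a b z 0 = 1 := by
  simp [kummerTerm, poch]

lemma kummerTerm_succ (a b z : ℝ) (n : ℕ) :
    kummerTerm a b z (n + 1) = kummerTerm a b z n * ((a + n) / (b + n) * (z / (n + 1))) := by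
  simp only [kummerTerm, poch_succ, pow_succ, Nat.factorial_succ, Nat.cast_mul, Nat.cast_succ,
    div_eq_mul_inv, mul_inv]
  ring

/-- No condition on `b` is needed: if `b` is a nonpositive integer then `poch b n = 0` for large
`n`, and Lean's `x / 0 = 0` makes the series terminate. -/
lemma summable_kummerTerm (a b z : ℝ) : Summable (kummerTerm a b z) := by
  have hratio : Tendsto (fun n : ℕ ↦ (a + n) / (b + n) * (z / (n + 1))) atTop (𝓝 0) := by
    simpa [div_eq_mul_inv] using (tendsto_add_mul_div_add_mul_atTop_nhds a b 1 one_ne_zero).mul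
      (tendsto_one_div_add_atTop_nhds_zero_nat.const_mul z)
  refine summable_of_ratio_norm_eventually_le (r := 1 / 2) (by norm_num) ?_
  filter_upwards [hratio.norm.eventually_le_const (by norm_num : ‖(0 : ℝ)‖ < 1 / 2)] with n hn
  rw [kummerTerm_succ, norm_mul, mul_comm]
  exact mul_le_mul_of_nonneg_right hn (norm_nonneg _)

lemma kummerTerm_succ_eq_F22_term (a b z : ℝ) (n : ℕ) :
    kummerTerm a b z (n + 1) = a * z / b *
      (poch 1 n * poch (a + 1) n / (poch 2 n * poch (b + 1) n) * z ^ n / n !) := by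
  simp only [kummerTerm, poch_one, poch_two, poch_succ_left, pow_succ, Nat.factorial_succ,
    Nat.cast_mul, Nat.cast_succ, div_eq_mul_inv, mul_inv]
  have hn : (n ! : ℝ) ≠ 0 := by positivity
  field_simp

theorem F11_eq_one_add_F22 (a b z : ℝ) :
    F11 a b z = 1 + a * z / b * F22 1 (a + 1) 2 (b + 1) z := by
  rw [F11_eq_tsum_kummerTerm, (summable_kummerTerm a b z).tsum_eq_zero_add, kummerTerm_zero, F22,
    ← tsum_mul_left]
  simp only [kummerTerm_succ_eq_F22_term]

/-- With `C = ((1−ξ)/(2Γ(1−ξ)))·(A/2)^{(1+ξ)/2}·Γ((1−ξ)/2)·₁F₁[−(1+ξ)/2; 1−ξ; 2/A]`, the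
general solution `F` of the fractional-moment recurrence takes the value
`F(−1/2+ξ/2) = ((1−ξ)/4)·A^{(1+ξ)/2}` forced by the recurrence. -/
theorem constant_pins_down_general_solution
    (A lam : ℝ) (hA : 0 < A) (hlam : lam ∈ Set.Ioo (0 : ℝ) (1/8))
    (ξ : ℝ) (hξ : ξ = Real.sqrt (1 - 8 * lam))
    (C : ℝ)
    (hC : C = ((1 - ξ) / (2 * Real.Gamma (1 - ξ))) * (A / 2) ^ ((1 + ξ) / 2) *
      Real.Gamma ((1 - ξ) / 2) * F11 (-(1 + ξ) / 2) (1 - ξ) (2 / A))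
    (F : ℝ → ℝ)
    (hF : ∀ s : ℝ, F s =
      (2 * lam * A ^ s) / (s * (s - 1) + 2 * lam) *
          F22 1 (-s) (3/2 + ξ/2 - s) (3/2 - ξ/2 - s) (2 / A) +
        C * 2 ^ s * Real.Gamma (1/2 + ξ/2 - s) * Real.Gamma (1/2 - ξ/2 - s) /
          Real.Gamma (-s)) :
    F (-1/2 + ξ/2) = ((1 - ξ) / 4) * A ^ ((1 + ξ) / 2) := by
  obtain ⟨hlam0, hlam8⟩ := hlam
  have hξsq : ξ ^ 2 = 1 - 8 * lam := by rw [hξ]; exact Real.sq_sqrt (by linarith)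
  have hξ1 : ξ < 1 := by
    rw [hξ, Real.sqrt_lt' one_pos]
    linarith
  have hcontig := F11_eq_one_add_F22 (-(1 + ξ) / 2) (1 - ξ) (2 / A)
  rw [show -(1 + ξ) / 2 + 1 = (1 - ξ) / 2 by ring, show 1 - ξ + 1 = 2 - ξ by ring] at hcontig
  have hApow : A ^ ((1 + ξ) / 2) = A ^ (-1/2 + ξ/2) * A := by
    rw [← Real.rpow_add_one hA.ne']; ring_nf
  have htwopow : (2 : ℝ) ^ ((1 + ξ) / 2) = 2 ^ (-1/2 + ξ/2) * 2 := by
    rw [← Real.rpow_add_one two_ne_zero]; ring_nf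
  rw [hF, hC, Real.div_rpow hA.le zero_le_two, hApow, htwopow,
    show -(-1/2 + ξ/2) = (1 - ξ) / 2 by ring, show 3/2 + ξ/2 - (-1/2 + ξ/2) = 2 by ring,
    show 3/2 - ξ/2 - (-1/2 + ξ/2) = 2 - ξ by ring, show 1/2 + ξ/2 - (-1/2 + ξ/2) = 1 by ring,
    show 1/2 - ξ/2 - (-1/2 + ξ/2) = 1 - ξ by ring,
    show (-1/2 + ξ/2) * (-1/2 + ξ/2 - 1) + 2 * lam = 1 - ξ by linear_combination hξsq / 4,
    Real.Gamma_one]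
  have hGamma : Real.Gamma (1 - ξ) ≠ 0 := (Real.Gamma_pos_of_pos (by linarith)).ne'
  have hGamma' : Real.Gamma ((1 - ξ) / 2) ≠ 0 := (Real.Gamma_pos_of_pos (by linarith)).ne'
  have hpow2 : (2 : ℝ) ^ (-1/2 + ξ/2) ≠ 0 := (Real.rpow_pos_of_pos two_pos _).ne'
  have hξ1' : 1 - ξ ≠ 0 := by linarith
  generalize F11 _ _ _ = G at hcontig ⊢
  generalize F22 _ _ _ _ _ = T at hcontig ⊢
  field_simp at hcontig ⊢
  linear_combination 4 * (1 - ξ) * hcontig + 4 * T * hξsq
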